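/- Let q ≥ 2 be an integer, (ε_d : d ∈ D_q) a probability vector on D_q, and V the associated channel. Then the symmetric capacity I(V) := Σ_{y ∈ Y} Σ_{x ∈ Z_q} (1/q) · V(y ∣ x) · ln( V(y ∣ x) / ( Σ_{x' ∈ Z_q} (1/q) · V(y ∣ x') ) ), with the convention that summands with V(y ∣ x) = 0 equal 0, satisfies I(V) = Σ_{d ∈ D_q} ε_d · ln d. -/

import Mathlib

/-!
Under the uniform input, the output `[r]_d` has probability `ε_d / d`, so each summand with
`V([r]_d ∣ x) = ε_d` has logarithm `ln (ε_d / (ε_d / d)) = ln d`. For fixed `d` there are `d`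
residues `r` and `q / d` inputs in each class, so the weights `(1/q) · ε_d` add up to `ε_d`.
-/

open Finset

/-- The generalized erasure channel `V = V_(q)(ε_d : d ∈ D_q)`:
the probability of output symbol `[r]_d` given input `x` is `ε d` if
`x ≡ r (mod d)`, and `0` otherwise. -/
noncomputable def Vch (ε : ℕ → ℝ) (d r x : ℕ) : ℝ :=
  if x % d = r % d then ε d else 0

lemma Nat.card_filter_range_modEq_of_dvd {q d : ℕ} (hdq : d ∣ q) (hd : 0 < d) (r : ℕ) :
    #{x ∈ range q | x ≡ r [MOD d]} = q / d := by
  rw [← Nat.count_eq_card_filter_range, Nat.count_modEq_card _ hd, Nat.mod_eq_zero_of_dvd hdq]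
  simp

lemma Real.mul_log_div_div_self (a b : ℝ) : a * Real.log (a / (a / b)) = a * Real.log b := by
  rcases eq_or_ne a 0 with rfl | ha
  · simp
  · rw [div_div_cancel₀ ha]

section Vch

variable {q d : ℕ} (ε : ℕ → ℝ)

lemma sum_range_Vch (hdq : d ∣ q) (hd : 0 < d) (r : ℕ) :
    ∑ x ∈ range q, Vch ε d r x = (q / d : ℕ) * ε d := by
  unfold Vch
  rw [← sum_filter, sum_const, nsmul_eq_mul, ← Nat.card_filter_range_modEq_of_dvd hdq hd r]
  rfl

lemma sum_range_inv_mul_Vch (hq : q ≠ 0) (hdq : d ∣ q) (hd : 0 < d) (r : ℕ) :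
    ∑ x ∈ range q, 1 / (q : ℝ) * Vch ε d r x = ε d / d := by
  rw [← mul_sum, sum_range_Vch ε hdq hd, Nat.cast_div hdq (by positivity)]
  field_simp

lemma Vch_mul_log_div (d r x : ℕ) :
    Vch ε d r x * Real.log (Vch ε d r x / (ε d / d)) = Vch ε d r x * Real.log d := by
  unfold Vch
  split_ifs
  · exact Real.mul_log_div_div_self _ _
  · simp

end Vch

theorem stmt_7_general (q : ℕ)
    (ε : ℕ → ℝ) :
    (∑ d ∈ q.divisors, ∑ r ∈ range d, ∑ x ∈ range q,
        (1 / (q : ℝ)) * Vch ε d r x *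
          Real.log (Vch ε d r x / ∑ x' ∈ range q, (1 / (q : ℝ)) * Vch ε d r x'))
      = ∑ d ∈ q.divisors, ε d * Real.log d := by
  refine sum_congr rfl fun d hd => ?_
  obtain ⟨hdq, hq⟩ := Nat.mem_divisors.1 hd
  have hd0 : 0 < d := Nat.pos_of_dvd_of_pos hdq (Nat.pos_of_ne_zero hq)
  simp_rw [sum_range_inv_mul_Vch ε hq hdq hd0, mul_assoc, Vch_mul_log_div, ← mul_assoc,
    ← sum_mul, ← mul_sum, sum_range_Vch ε hdq hd0, sum_const, card_range, nsmul_eq_mul,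
    Nat.cast_div hdq (by positivity : (d : ℝ) ≠ 0)]
  field_simp

/-- The symmetric capacity
`I(V) = Σ_{y ∈ Y} Σ_{x ∈ Z_q} (1/q)·V(y∣x)·ln(V(y∣x) / (Σ_{x' ∈ Z_q} (1/q)·V(y∣x')))`
of the channel `V` equals `Σ_{d ∈ D_q} ε_d · ln d`.
(In Lean, summands with `V(y∣x) = 0` vanish automatically since they carry the factor
`V(y∣x) = 0`, matching the stated convention.) -/
theorem stmt_7 (q : ℕ) (hq : 2 ≤ q)
    (ε : ℕ → ℝ) (hε : ∀ d ∈ q.divisors, 0 ≤ ε d) (hsum : ∑ d ∈ q.divisors, ε d = 1) :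
    (∑ d ∈ q.divisors, ∑ r ∈ range d, ∑ x ∈ range q,
        (1 / (q : ℝ)) * Vch ε d r x *
          Real.log (Vch ε d r x / ∑ x' ∈ range q, (1 / (q : ℝ)) * Vch ε d r x'))
      = ∑ d ∈ q.divisors, ε d * Real.log d :=
  stmt_7_general q ε
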